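/- arXiv:1511.07588 — 2 statements merged into one kernel-verified Lean document; each statement's English description precedes it below -/
import Mathlib

section
/- For every nonnegative integer m, 2^{m+1} · F_{m+1} = Σ_{i=0}^{m} 2^i · L_i (Sury's identity). -/
/-- Sury's identity: `2^(m+1) * F (m+1) = ∑_{i=0}^{m} 2^i * L i`, where `F` are the
Fibonacci numbers (`F 0 = 0`, `F 1 = 1`) and `L` the Lucas numbers (`L 0 = 2`, `L 1 = 1`). -/
theorem sury_identity (F L : ℕ → ℤ)
    (hF0 : F 0 = 0) (hF1 : F 1 = 1)
    (hFrec : ∀ n : ℕ, F (n + 2) = F (n + 1) + F n)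
    (hL0 : L 0 = 2) (hL1 : L 1 = 1)
    (hLrec : ∀ n : ℕ, L (n + 2) = L (n + 1) + L n)
    (m : ℕ) :
    2 ^ (m + 1) * F (m + 1) = ∑ i ∈ Finset.range (m + 1), 2 ^ i * L i := by
  have hLF : ∀ n, L n = 2 * F (n + 1) - F n := by
    intro n
    induction n using Nat.strong_induction_on with
    | _ n ih =>
      match n with
      | 0 => simp [hL0, hF1, hF0]
      | 1 => simp [hL1, hFrec 0, hF0, hF1]
      | (k+2) =>
        rw [hLrec k, ih (k+1) (by omega), ih k (by omega),
          show k+2+1 = k+1+2 from rfl, hFrec (k+1)]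
        linarith [hFrec k]
  induction m with
  | zero => simp [hF1, hL0]
  | succ k ih =>
    rw [Finset.sum_range_succ, ← ih, hLF (k+1), hFrec k]
    ring
end

section
/- For every nonnegative integer m, 3^{m+1} · F_{m+1} = Σ_{i=0}^{m} 3^i · L_i + Σ_{i=0}^{m+1} 3^{i-1} · F_i (Marques's identity), where the second sum is taken over the rationals (or, equivalently, 3^{m+2} · F_{m+1} = 3 · Σ_{i=0}^{m} 3^i · L_i + Σ_{i=0}^{m+1} 3^i · F_i over the integers). -/
/-- Marques's identity: `3^(m+1) * F (m+1) = ∑_{i=0}^{m} 3^i * L i + ∑_{i=0}^{m+1} 3^(i-1) * F i`,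
where the second sum is taken over the rationals; `F` are the Fibonacci numbers
(`F 0 = 0`, `F 1 = 1`) and `L` the Lucas numbers (`L 0 = 2`, `L 1 = 1`). -/
theorem marques_identity (F L : ℕ → ℚ)
    (hF0 : F 0 = 0) (hF1 : F 1 = 1)
    (hFrec : ∀ n : ℕ, F (n + 2) = F (n + 1) + F n)
    (hL0 : L 0 = 2) (hL1 : L 1 = 1)
    (hLrec : ∀ n : ℕ, L (n + 2) = L (n + 1) + L n)
    (m : ℕ) :
    3 ^ (m + 1) * F (m + 1) =
      (∑ i ∈ Finset.range (m + 1), 3 ^ i * L i) +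
        ∑ i ∈ Finset.range (m + 2), (3 : ℚ) ^ ((i : ℤ) - 1) * F i := by
  have key : ∀ n : ℕ, L n + F n = 2 * F (n + 1) := by
    intro n
    induction n using Nat.twoStepInduction with
    | zero => rw [hL0, hF0, hF1]; ring
    | one => rw [hL1, hF1, hFrec, hF0, hF1]; ring
    | more n ih1 ih2 =>
      rw [hLrec, hFrec, hFrec (n + 1)]
      linarith [ih1, ih2]
  induction m with
  | zero =>
    simp [Finset.sum_range_succ, hL0, hF0, hF1]
    norm_num
  | succ m ih =>
    rw [Finset.sum_range_succ, Finset.sum_range_succ (n := m + 2)]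
    have h := key (m + 1)
    push_cast
    have e1 : ((m : ℤ) + 2) - 1 = (m : ℤ) + 1 := by ring
    rw [e1]
    have e2 : ((3:ℚ)) ^ ((m : ℤ) + 1) = 3 ^ (m + 1) := by
      rw [← zpow_natCast]; push_cast; ring_nf
    rw [e2]
    have : (3:ℚ) ^ (m + 1 + 1) * F (m + 1 + 1) =
        3 ^ (m + 1) * F (m + 1) + 3 ^ (m + 1) * L (m + 1) + 3 ^ (m + 1) * F (m + 2) := by
      have : (3:ℚ) * F (m + 2) = F (m + 1) + L (m + 1) + F (m + 2) := by linarith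
      calc (3:ℚ) ^ (m + 1 + 1) * F (m + 1 + 1)
          = 3 ^ (m + 1) * (3 * F (m + 2)) := by ring
        _ = 3 ^ (m + 1) * (F (m + 1) + L (m + 1) + F (m + 2)) := by rw [this]
        _ = _ := by ring
    rw [this, ih]
    ring
end
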